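/- Let σ(z) = tanh(z/√2) and let Q : [−1,1] → ℝ be odd, continuously differentiable, with Q(1) = 1. Assume z ↦ z·(1 − Q(σ(z))) is integrable on (0,∞). Then the geometric moment 𝓜₁[Q] := ∫_{−∞}^{∞} z·(1 + Q(σ(z)) − 2·𝟙_{(0,∞)}(z)) dz satisfies 𝓜₁[Q] = −2·∫₀¹ Q'(u)·(arctanh u)² du. -/

import Mathlib

/-!
Oddness of `Q` and `σ` makes the integrand even, equal to `-|z| (1 - Q (σ |z|))`, so
`𝓜₁[Q] = -2 ∫₀^∞ z (1 - Q (σ z)) dz`. Integrate by parts against `z² / 2`: since `Q` is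
Lipschitz and `Q 1 = 1`, `1 - Q (σ z) = O(e^{-√2 z})`, so the boundary terms vanish and all
integrals converge. The substitution `u = σ z`, under which `z² / 2 = arctanh(u)²` and
`du = σ'(z) dz`, turns the remaining `∫₀^∞ Q'(σ z) σ'(z) z² / 2 dz` into
`∫₀¹ Q'(u) arctanh(u)² du`.
-/

open MeasureTheory intervalIntegral

/-- The heteroclinic profile `σ(z) = tanh(z/√2)`. -/
noncomputable def sigma (z : ℝ) : ℝ := Real.tanh (z / Real.sqrt 2)

/-- The inverse hyperbolic tangent on `(−1,1)`. -/
noncomputable def arctanh (x : ℝ) : ℝ := (1 / 2) * Real.log ((1 + x) / (1 - x))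

open Real Filter Topology
open Set hiding sigma
open scoped NNReal

namespace Real

theorem hasDerivAt_tanh (x : ℝ) : HasDerivAt tanh (1 - tanh x ^ 2) x := by
  have hcosh : cosh x ≠ 0 := (cosh_pos x).ne'
  have h := (hasDerivAt_sinh x).div (hasDerivAt_cosh x) hcosh
  rw [show sinh / cosh = tanh from funext fun y => (tanh_eq_sinh_div_cosh y).symm] at h
  refine h.congr_deriv ?_
  rw [tanh_eq_sinh_div_cosh]
  field_simp

theorem one_sub_tanh_le (x : ℝ) : 1 - tanh x ≤ 2 * exp (-2 * x) := by
  have hprod : exp x * exp (-x) = 1 := by rw [← exp_add, add_neg_cancel, exp_zero]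
  have hsq : exp (-2 * x) = exp (-x) ^ 2 := by rw [← exp_nat_mul]; ring_nf
  have hpos : 0 < exp x + exp (-x) := by positivity
  rw [tanh_eq, hsq, one_sub_div hpos.ne', div_le_iff₀ hpos]
  nlinarith [exp_pos (-x)]

theorem tanh_pos {x : ℝ} (hx : 0 < x) : 0 < tanh x := by
  rw [tanh_eq_sinh_div_cosh]
  exact div_pos (sinh_pos_iff.2 hx) (cosh_pos x)

end Real

lemma hasDerivAt_sigma (z : ℝ) : HasDerivAt sigma ((1 - sigma z ^ 2) / √2) z := by
  have h := (hasDerivAt_tanh (z / √2)).comp z ((hasDerivAt_id z).div_const √2)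
  exact h.congr_deriv (by simp only [one_div, sigma]; ring)

lemma differentiable_sigma : Differentiable ℝ sigma :=
  fun z => (hasDerivAt_sigma z).differentiableAt

lemma sigma_mem_Ioo (z : ℝ) : sigma z ∈ Ioo (-1) 1 :=
  ⟨neg_one_lt_tanh _, tanh_lt_one _⟩

lemma sigma_neg (z : ℝ) : sigma (-z) = -sigma z := by
  rw [sigma, sigma, neg_div, tanh_neg]

lemma sigma_injective : Function.Injective sigma :=
  fun _ _ h => (div_left_inj' (sqrt_pos.2 two_pos).ne').1 (tanh_injective h)

lemma sigma_image_Ioi : sigma '' Ioi 0 = Ioo 0 1 := by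
  refine Subset.antisymm ?_ fun y hy => ⟨√2 * artanh y, ?_, ?_⟩
  · rintro _ ⟨z, hz, rfl⟩
    exact ⟨tanh_pos (div_pos hz (sqrt_pos.2 two_pos)), (sigma_mem_Ioo z).2⟩
  · exact mul_pos (sqrt_pos.2 two_pos) (artanh_pos hy)
  · rw [sigma, mul_div_cancel_left₀ _ (sqrt_pos.2 two_pos).ne',
      tanh_artanh ⟨by linarith [hy.1], hy.2⟩]

lemma arctanh_sigma_sq (z : ℝ) : arctanh (sigma z) ^ 2 = z ^ 2 / 2 := by
  rw [arctanh, ← artanh_eq_half_log (Ioo_subset_Icc_self (sigma_mem_Ioo z)), sigma, artanh_tanh,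
    div_pow, sq_sqrt zero_le_two]

lemma one_sub_sigma_le (z : ℝ) : 1 - sigma z ≤ 2 * exp (-√2 * z) := by
  have h := one_sub_tanh_le (z / √2)
  rwa [show -2 * (z / √2) = -(2 / √2) * z by ring, div_sqrt] at h

lemma sigma_deriv_nonneg (z : ℝ) : 0 ≤ (1 - sigma z ^ 2) / √2 := by
  have := sigma_mem_Ioo z
  exact div_nonneg (by nlinarith [this.1, this.2]) (sqrt_nonneg 2)

lemma sigma_deriv_le (z : ℝ) : (1 - sigma z ^ 2) / √2 ≤ 4 * exp (-√2 * z) := by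
  have hσ := sigma_mem_Ioo z
  calc (1 - sigma z ^ 2) / √2 ≤ 1 - sigma z ^ 2 :=
        div_le_self (by nlinarith [hσ.1, hσ.2]) one_lt_sqrt_two.le
    _ ≤ 2 * (1 - sigma z) := by nlinarith [hσ.1, hσ.2]
    _ ≤ 4 * exp (-√2 * z) := by linarith [one_sub_sigma_le z]

theorem ContDiffOn.exists_lipschitzOnWith_Icc {E : Type*} [NormedAddCommGroup E] [NormedSpace ℝ E]
    {f : ℝ → E} {a b : ℝ} (hab : a < b) (hf : ContDiffOn ℝ 1 f (Icc a b)) :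
    ∃ K : ℝ≥0, LipschitzOnWith K f (Icc a b) := by
  obtain ⟨C, hC⟩ := isCompact_Icc.exists_bound_of_continuousOn
    (hf.continuousOn_derivWithin (uniqueDiffOn_Icc hab) le_rfl)
  refine ⟨C.toNNReal, (convex_Icc a b).lipschitzOnWith_of_nnnorm_derivWithin_le
    (hf.differentiableOn one_ne_zero) fun x hx => ?_⟩
  rw [← NNReal.coe_le_coe, coe_nnnorm, Real.coe_toNNReal']
  exact (hC x hx).trans (le_max_left _ _)

lemma integrableOn_pow_mul_exp_neg_mul (n : ℕ) {b : ℝ} (hb : 0 < b) :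
    IntegrableOn (fun x : ℝ => x ^ n * exp (-b * x)) (Ioi 0) := by
  simpa [rpow_natCast] using
    integrableOn_rpow_mul_exp_neg_mul_rpow (s := n) (by linarith [n.cast_nonneg (α := ℝ)])
      one_pos hb

lemma integral_zero_one_eq_integral_Ioi_comp_sigma {E : Type*} [NormedAddCommGroup E]
    [NormedSpace ℝ E] (G : ℝ → E) :
    ∫ u in (0 : ℝ)..1, G u = ∫ z in Ioi 0, ((1 - sigma z ^ 2) / √2) • G (sigma z) := by
  rw [integral_of_le zero_le_one, integral_Ioc_eq_integral_Ioo, ← sigma_image_Ioi,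
    integral_image_eq_integral_abs_deriv_smul measurableSet_Ioi
      (fun z _ => (hasDerivAt_sigma z).hasDerivWithinAt) sigma_injective.injOn]
  simp_rw [abs_of_nonneg (sigma_deriv_nonneg _)]

theorem integral_indicator_Ioi_add_comp_neg {E : Type*} [NormedAddCommGroup E] [NormedSpace ℝ E]
    {g : ℝ → E} (hg : IntegrableOn g (Ioi 0)) :
    ∫ z, ((Ioi 0).indicator g z + (Ioi 0).indicator g (-z)) =
      (2 : ℝ) • ∫ z in Ioi 0, g z := by
  have hind : Integrable ((Ioi 0).indicator g) := (integrable_indicator_iff measurableSet_Ioi).2 hg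
  rw [integral_add hind hind.comp_neg, integral_neg_eq_self,
    MeasureTheory.integral_indicator measurableSet_Ioi, two_smul]

section ConservedMapping

variable {Q : ℝ → ℝ} {K : ℝ≥0}

lemma continuous_comp_sigma (hK : LipschitzOnWith K Q (Icc (-1) 1)) :
    Continuous fun z => Q (sigma z) :=
  hK.continuousOn.comp_continuous differentiable_sigma.continuous
    fun z => Ioo_subset_Icc_self (sigma_mem_Ioo z)

lemma abs_one_sub_comp_sigma_le (hQ1 : Q 1 = 1) (hK : LipschitzOnWith K Q (Icc (-1) 1)) (z : ℝ) :
    |1 - Q (sigma z)| ≤ 2 * K * exp (-√2 * z) := by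
  have hσ := sigma_mem_Ioo z
  have h := hK.dist_le_mul 1 (right_mem_Icc.2 (by norm_num)) (sigma z) (Ioo_subset_Icc_self hσ)
  rw [dist_eq, dist_eq, hQ1, abs_of_pos (sub_pos.2 hσ.2)] at h
  calc |1 - Q (sigma z)| ≤ K * (1 - sigma z) := h
    _ ≤ K * (2 * exp (-√2 * z)) := mul_le_mul_of_nonneg_left (one_sub_sigma_le z) K.coe_nonneg
    _ = 2 * K * exp (-√2 * z) := by ring

lemma integrableOn_mul_one_sub_comp_sigma (hQ1 : Q 1 = 1) (hK : LipschitzOnWith K Q (Icc (-1) 1)) :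
    IntegrableOn (fun z => z * (1 - Q (sigma z))) (Ioi 0) := by
  refine Integrable.mono'
    ((integrableOn_pow_mul_exp_neg_mul 1 (sqrt_pos.2 two_pos)).const_mul (2 * K))
    (continuous_id.mul (continuous_const.sub (continuous_comp_sigma hK))).aestronglyMeasurable
    ((ae_restrict_iff' measurableSet_Ioi).2 (.of_forall fun z (hz : 0 < z) => ?_))
  rw [norm_mul, norm_of_nonneg hz.le, pow_one, mul_left_comm]
  exact mul_le_mul_of_nonneg_left (abs_one_sub_comp_sigma_le hQ1 hK z) hz.le

lemma integrableOn_deriv_comp_sigma_mul (hK : LipschitzOnWith K Q (Icc (-1) 1)) :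
    IntegrableOn (fun z => -(deriv Q (sigma z) * ((1 - sigma z ^ 2) / √2)) * (z ^ 2 / 2))
      (Ioi 0) := by
  have hmeas :
      Measurable fun z => -(deriv Q (sigma z) * ((1 - sigma z ^ 2) / √2)) * (z ^ 2 / 2) := by
    have hσ : Measurable sigma := differentiable_sigma.continuous.measurable
    have hQσ : Measurable fun z => deriv Q (sigma z) := (measurable_deriv Q).comp hσ
    fun_prop
  refine Integrable.mono'
    ((integrableOn_pow_mul_exp_neg_mul 2 (sqrt_pos.2 two_pos)).const_mul (2 * K))
    hmeas.aestronglyMeasurable (.of_forall fun z => ?_)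
  have hQ' : |deriv Q (sigma z)| ≤ K := norm_deriv_le_of_lipschitzOn
    (Icc_mem_nhds (sigma_mem_Ioo z).1 (sigma_mem_Ioo z).2) hK
  rw [norm_mul, norm_neg, norm_mul, norm_of_nonneg (sigma_deriv_nonneg z),
    norm_of_nonneg (by positivity : (0 : ℝ) ≤ z ^ 2 / 2)]
  calc |deriv Q (sigma z)| * ((1 - sigma z ^ 2) / √2) * (z ^ 2 / 2)
      ≤ K * (4 * exp (-√2 * z)) * (z ^ 2 / 2) := by
        gcongr
        · exact sigma_deriv_nonneg z
        · exact sigma_deriv_le z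
    _ = 2 * K * (z ^ 2 * exp (-√2 * z)) := by ring

lemma tendsto_one_sub_comp_sigma_mul_sq (hQ1 : Q 1 = 1) (hK : LipschitzOnWith K Q (Icc (-1) 1)) :
    Tendsto (fun z => (1 - Q (sigma z)) * (z ^ 2 / 2)) atTop (𝓝 0) := by
  have hlim := (tendsto_rpow_mul_exp_neg_mul_atTop_nhds_zero 2 √2 (sqrt_pos.2 two_pos)).const_mul
    (K : ℝ)
  rw [mul_zero] at hlim
  refine squeeze_zero_norm' ?_ (by simpa only [rpow_two] using hlim)
  filter_upwards [eventually_ge_atTop 0] with z hz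
  rw [norm_mul, norm_of_nonneg (by positivity : (0 : ℝ) ≤ z ^ 2 / 2)]
  calc |1 - Q (sigma z)| * (z ^ 2 / 2) ≤ 2 * K * exp (-√2 * z) * (z ^ 2 / 2) := by
        gcongr
        exact abs_one_sub_comp_sigma_le hQ1 hK z
    _ = K * (z ^ 2 * exp (-√2 * z)) := by ring

end ConservedMapping

theorem integral_Ioi_mul_one_sub_comp_sigma {Q : ℝ → ℝ} (hQ : ContDiffOn ℝ 1 Q (Icc (-1) 1))
    (hQ1 : Q 1 = 1) :
    ∫ z in Ioi 0, z * (1 - Q (sigma z)) = ∫ u in (0 : ℝ)..1, deriv Q u * arctanh u ^ 2 := by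
  obtain ⟨K, hK⟩ := hQ.exists_lipschitzOnWith_Icc (by norm_num)
  have hderiv (z : ℝ) : HasDerivAt (fun z => 1 - Q (sigma z))
      (-(deriv Q (sigma z) * ((1 - sigma z ^ 2) / √2))) z := by
    have hσ := sigma_mem_Ioo z
    have hQz := (hQ.contDiffAt (Icc_mem_nhds hσ.1 hσ.2)).differentiableAt one_ne_zero
    simpa using (hQz.hasDerivAt.comp z (hasDerivAt_sigma z)).const_sub 1
  have hint : IntegrableOn (fun z => (1 - Q (sigma z)) * z) (Ioi 0) := by
    simpa only [mul_comm] using integrableOn_mul_one_sub_comp_sigma hQ1 hK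
  have hzero : Tendsto (fun z => (1 - Q (sigma z)) * (z ^ 2 / 2)) (𝓝[>] 0) (𝓝 0) := by
    have hcont : Continuous fun z => (1 - Q (sigma z)) * (z ^ 2 / 2) :=
      (continuous_const.sub (continuous_comp_sigma hK)).mul (by fun_prop)
    simpa using (hcont.tendsto 0).mono_left nhdsWithin_le_nhds
  have hibp := integral_Ioi_mul_deriv_eq_deriv_mul (fun z _ => hderiv z)
    (fun z _ => by simpa using (hasDerivAt_pow 2 z).div_const 2)
    hint (integrableOn_deriv_comp_sigma_mul hK) hzero (tendsto_one_sub_comp_sigma_mul_sq hQ1 hK)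
  rw [integral_zero_one_eq_integral_Ioi_comp_sigma]
  simp_rw [mul_comm _ (1 - Q _), smul_eq_mul, arctanh_sigma_sq]
  rw [hibp, sub_self, zero_sub, ← MeasureTheory.integral_neg]
  congr 1 with z
  ring

lemma geometric_moment_integrand_eq {Q : ℝ → ℝ} (hodd : ∀ u, Q (-u) = -Q u) (z : ℝ) :
    z * (1 + Q (sigma z) - 2 * (Ioi (0 : ℝ)).indicator (fun _ => (1 : ℝ)) z) =
      -((Ioi 0).indicator (fun z => z * (1 - Q (sigma z))) z +
        (Ioi 0).indicator (fun z => z * (1 - Q (sigma z))) (-z)) := by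
  rcases lt_trichotomy z 0 with hz | rfl | hz
  · have hz' : z ∉ Ioi (0 : ℝ) := not_lt.2 hz.le
    have hnz : -z ∈ Ioi (0 : ℝ) := neg_pos.2 hz
    rw [indicator_of_notMem hz', indicator_of_notMem hz', indicator_of_mem hnz, sigma_neg, hodd]
    ring
  · simp
  · have hz' : z ∈ Ioi (0 : ℝ) := hz
    have hnz : -z ∉ Ioi (0 : ℝ) := not_lt.2 (neg_nonpos.2 hz.le)
    rw [indicator_of_mem hz', indicator_of_mem hz', indicator_of_notMem hnz]
    ring

theorem geometric_moment_formula_general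
    (Q : ℝ → ℝ) (hodd : ∀ u : ℝ, Q (-u) = -Q u)
    (hQ : ContDiffOn ℝ 1 Q (Set.Icc (-1) 1)) (hQ1 : Q 1 = 1) :
    (∫ z : ℝ, z * (1 + Q (sigma z) - 2 * Set.indicator (Set.Ioi (0:ℝ)) (fun _ => (1:ℝ)) z))
      = -2 * ∫ u in (0:ℝ)..1, deriv Q u * (arctanh u) ^ 2 := by
  obtain ⟨K, hK⟩ := hQ.exists_lipschitzOnWith_Icc (by norm_num)
  simp_rw [geometric_moment_integrand_eq hodd]
  rw [MeasureTheory.integral_neg, integral_indicator_Ioi_add_comp_neg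
    (integrableOn_mul_one_sub_comp_sigma hQ1 hK), integral_Ioi_mul_one_sub_comp_sigma hQ hQ1,
    smul_eq_mul, neg_mul]

/-- Single-integral formula for the geometric moment: for `Q` odd, `C¹` on `[−1,1]`
with `Q(1) = 1`, assuming `z ↦ z(1 − Q(σ(z)))` is integrable on `(0,∞)`,
`𝓜₁[Q] = ∫ z(1 + Q(σ(z)) − 2·𝟙_{(0,∞)}(z)) dz = −2∫₀¹ Q'(u)·arctanh(u)² du`. -/
theorem geometric_moment_formula
    (Q : ℝ → ℝ) (hodd : ∀ u : ℝ, Q (-u) = -Q u)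
    (hQ : ContDiffOn ℝ 1 Q (Set.Icc (-1) 1)) (hQ1 : Q 1 = 1)
    (hint : IntegrableOn (fun z : ℝ => z * (1 - Q (sigma z))) (Set.Ioi 0)) :
    (∫ z : ℝ, z * (1 + Q (sigma z) - 2 * Set.indicator (Set.Ioi (0:ℝ)) (fun _ => (1:ℝ)) z))
      = -2 * ∫ u in (0:ℝ)..1, deriv Q u * (arctanh u) ^ 2 :=
  geometric_moment_formula_general Q hodd hQ hQ1
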